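/- Let x ∈ H_ℝ be a unit vector and let x^{⊗2n} ∈ K_n denote the simple tensor with all 2n factors equal to x. Then for all complex parameters q₊,q₋ and all n ≥ 0: ⟨x^{⊗2n}, P^{(n)}_{q₊,q₋} x^{⊗2n}⟩_{0,0} = ∏_{k=0}^{n−1} (1 + 2k·q₊ + q₋). -/

import Mathlib

open scoped ComplexOrder

noncomputable section

namespace TypeB

/-- The nontrivial orbits (cycles) of a permutation. -/
def ntOrbits {X : Type*} (σ : Equiv.Perm X) : Set (Set X) :=
  {O | ∃ i : X, σ i ≠ i ∧ O = {j | σ.SameCycle i j}}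

def negSet (B : Set ℤ) : Set ℤ := (fun x : ℤ => -x) '' B

def negOrbits (σ : Equiv.Perm ℤ) : Set (Set ℤ) := {O ∈ ntOrbits σ | negSet O = O}

def posOrbits (σ : Equiv.Perm ℤ) : Set (Set ℤ) := {O ∈ ntOrbits σ | negSet O ≠ O}

def expPlus (σ : Equiv.Perm ℤ) : ℕ :=
  (∑ᶠ O ∈ posOrbits σ, (O.ncard - 1)) / 2 + ∑ᶠ O ∈ negOrbits σ, (O.ncard / 2 - 1)

def negCount (σ : Equiv.Perm ℤ) : ℕ := (negOrbits σ).ncard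

def phi (qp qm : ℂ) (σ : Equiv.Perm ℤ) : ℂ := qp ^ expPlus σ * qm ^ negCount σ

def Bset (n : ℕ) : Set (Equiv.Perm ℤ) :=
  {σ | (∀ i : ℤ, σ (-i) = -σ i) ∧ ∀ i : ℤ, (n : ℤ) < |i| → σ i = i}

/-- The classification set of parameters (Theorem 1.1). -/
def ClassSet (qp qm : ℂ) : Prop :=
  (∃ (M N : ℕ) (ε : ℤ), (ε = 1 ∨ ε = -1) ∧ M + N ≠ 0 ∧
      qp = (ε : ℂ) / ((M : ℂ) + (N : ℂ)) ∧
      qm = ((M : ℂ) - (N : ℂ)) / ((M : ℂ) + (N : ℂ))) ∨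
  (qp = 0 ∧ ∃ r : ℝ, qm = (r : ℂ) ∧ -1 ≤ r ∧ r ≤ 1)

/-- The index set [±n] of the 2n tensor factors of K_n. -/
abbrev SIdx (n : ℕ) := {i : ℤ // i ≠ 0 ∧ |i| ≤ (n : ℤ)}

instance (n : ℕ) : Fintype (SIdx n) :=
  Fintype.subtype ((Finset.Icc (-(n : ℤ)) (n : ℤ)).erase 0)
    (by intro x; simp [Finset.mem_erase, Finset.mem_Icc, abs_le])

/-- H: the complexification of the real Hilbert space with orthonormal basis α. -/
abbrev Hsp (α : Type*) := α →₀ ℂ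

/-- K_n = H^{⊗2n}, with basis indexed by functions [±n] → α. -/
abbrev Ksp (α : Type*) (n : ℕ) := (SIdx n → α) →₀ ℂ

/-- The inner product of H (antilinear on the left). -/
def innerH {α : Type*} (x y : Hsp α) : ℂ :=
  y.sum fun a c => (starRingEnd ℂ) (x a) * c

/-- The free inner product ⟨·,·⟩₀,₀ on K_n (antilinear on the left); on simple tensors
it is the product of the inner products of the factors. -/
def inner00 {α : Type*} {n : ℕ} (F G : Ksp α n) : ℂ :=
  F.sum fun v c => (starRingEnd ℂ) c * G v

open Classical in
/-- The restriction of σ : Perm ℤ to [±n] (junk value 1 if σ does not preserve [±n];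
elements of B(n) do preserve it). -/
def permRestrict (n : ℕ) (σ : Equiv.Perm ℤ) : Equiv.Perm (SIdx n) :=
  if h : ∀ i : ℤ, (i ≠ 0 ∧ |i| ≤ (n : ℤ)) ↔ (σ i ≠ 0 ∧ |σ i| ≤ (n : ℤ)) then
    Equiv.Perm.subtypePerm σ (fun i => (h i).symm) else 1

/-- The action of σ ∈ B(n) on K_n permuting the tensor factors:
x_{−n}⊗…⊗x_n ↦ x_{σ(−n)}⊗…⊗x_{σ(n)}. -/
def act (α : Type*) [DecidableEq α] (n : ℕ) (σ : Equiv.Perm ℤ) :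
    Ksp α n →ₗ[ℂ] Ksp α n :=
  Finsupp.lmapDomain ℂ ℂ (fun v : SIdx n → α => v ∘ (permRestrict n σ))

/-- The type-B symmetrization operator P^{(n)}_{q₊,q₋} = Σ_{σ∈B(n)} φ_{q₊,q₋}(σ)·σ. -/
def Pop (α : Type*) [DecidableEq α] (n : ℕ) (qp qm : ℂ) : Ksp α n →ₗ[ℂ] Ksp α n :=
  ∑ᶠ σ ∈ Bset n, phi qp qm σ • act α n σ

/-- The deformed (semi-)inner product ⟨ξ,η⟩_{q₊,q₋} = ⟨ξ, P^{(n)} η⟩₀,₀ on K_n. -/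
def innerQ (α : Type*) [DecidableEq α] (n : ℕ) (qp qm : ℂ) (F G : Ksp α n) : ℂ :=
  inner00 F (Pop α n qp qm G)

/-- R^{(n)}_{q₊,q₋} = id + q₋·J_n⁻ + q₊·J_n⁺. -/
def Rop (α : Type*) [DecidableEq α] (n : ℕ) (qp qm : ℂ) : Ksp α n →ₗ[ℂ] Ksp α n :=
  LinearMap.id
    + qm • act α n (Equiv.swap (-(n : ℤ)) (n : ℤ))
    + qp • ∑ j ∈ (Finset.Icc (-(n : ℤ) + 1) ((n : ℤ) - 1)).erase 0,
        act α n (Equiv.swap j (n : ℤ) * Equiv.swap (-j) (-(n : ℤ)))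

/-- The inclusion [±n] ⊆ [±(n+1)]. -/
def castIdx {n : ℕ} (i : SIdx n) : SIdx (n + 1) :=
  ⟨i.1, i.2.1, i.2.2.trans (by push_cast; omega)⟩

/-- The position −(n+1) in [±(n+1)]. -/
def negEnd (n : ℕ) : SIdx (n + 1) :=
  ⟨-((n : ℤ) + 1), by refine ⟨by omega, ?_⟩; rw [abs_le]; constructor <;> omega⟩

/-- The position n+1 in [±(n+1)]. -/
def posEnd (n : ℕ) : SIdx (n + 1) :=
  ⟨(n : ℤ) + 1, by refine ⟨by omega, ?_⟩; rw [abs_le]; constructor <;> omega⟩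

/-- Restriction of a basis index of K_{n+1} to the middle factors [±n]. -/
def downFn {α : Type*} {n : ℕ} (v : SIdx (n + 1) → α) : SIdx n → α :=
  fun i => v (castIdx i)

open Classical in
/-- Extension of a basis index of K_n by values a at position −(n+1) and b at n+1. -/
def upFn {α : Type*} {n : ℕ} (w : SIdx n → α) (a b : α) : SIdx (n + 1) → α :=
  fun i => if h : i.1 ≠ 0 ∧ |i.1| ≤ (n : ℤ) then w ⟨i.1, h⟩
           else if i.1 < 0 then a else b

/-- id ⊗ T ⊗ id: the operator T on K_n acting on the middle 2n tensor factors of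
K_{n+1}, with the identity on the factors at positions −(n+1) and n+1. -/
def embedMid (α : Type*) [DecidableEq α] (n : ℕ) (T : Ksp α n →ₗ[ℂ] Ksp α n) :
    Ksp α (n + 1) →ₗ[ℂ] Ksp α (n + 1) :=
  Finsupp.lsum ℂ fun v : SIdx (n + 1) → α =>
    LinearMap.toSpanSingleton ℂ _
      (Finsupp.mapDomain (fun w : SIdx n → α => upFn w (v (negEnd n)) (v (posEnd n)))
        (T (Finsupp.single (downFn v) 1)))

/-- The left-right creation operator b*(x⊗y) : K_n → K_{n+1}: it tensors x at the
leftmost position −(n+1) and y at the rightmost position n+1. -/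
def bstar (α : Type*) [DecidableEq α] (n : ℕ) (x y : Hsp α) :
    Ksp α n →ₗ[ℂ] Ksp α (n + 1) :=
  Finsupp.lsum ℂ fun w : SIdx n → α =>
    LinearMap.toSpanSingleton ℂ _
      (x.sum fun a xa => y.sum fun b yb => Finsupp.single (upFn w a b) (xa * yb))

/-- The free annihilation operator b(x⊗y) : K_{n+1} → K_n, the ⟨·,·⟩₀,₀-adjoint of
b*(x⊗y):  x_{−(n+1)}⊗…⊗x_{n+1} ↦ ⟨x,x_{−(n+1)}⟩⟨y,x_{n+1}⟩·x_{−n}⊗…⊗x_n. -/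
def bfree (α : Type*) [DecidableEq α] (n : ℕ) (x y : Hsp α) :
    Ksp α (n + 1) →ₗ[ℂ] Ksp α n :=
  Finsupp.lsum ℂ fun v : SIdx (n + 1) → α =>
    LinearMap.toSpanSingleton ℂ _
      (((starRingEnd ℂ) (x (v (negEnd n))) * (starRingEnd ℂ) (y (v (posEnd n)))) •
        Finsupp.single (downFn v) (1 : ℂ))



/-- The canonical embedding H_ℝ → H of the real Hilbert space into its
complexification. -/
def cplx {α : Type*} (x : α →₀ ℝ) : Hsp α :=
  x.mapRange Complex.ofReal (by simp)

/-- The simple tensor x^{⊗2n} ∈ K_n with all 2n factors equal to x. -/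
def tpow (α : Type*) [DecidableEq α] (x : Hsp α) (n : ℕ) : Ksp α n :=
  ∑ v ∈ Fintype.piFinset (fun _ : SIdx n => x.support),
    Finsupp.single v (∏ i : SIdx n, x (v i))

/-! Every element of `B(n)` permutes the factors of `x^{⊗2n}` and so fixes it, while
`⟨x^{⊗2n}, x^{⊗2n}⟩₀,₀ = ‖x‖^{4n} = 1`; hence the left-hand side is `∑_{σ ∈ B(n)} φ(σ)`.
Every `σ ∈ B(n+1)` factors uniquely as `g · t` with `g ∈ B(n)` and `t` the reflection sending
`b = σ⁻¹(n+1)` to `n+1`. If `b = n+1` then `t = 1`; if `b = -(n+1)`, then `t` adds the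
self-negative cycle `(n+1, -(n+1))`, so `φ` gains a factor `q₋`; otherwise `t` inserts `n+1` after
`b` and `-(n+1)` after `-b` in the cycles of `g`, which raises `‖ρ⁺‖ + ‖ρ⁻‖` by one and keeps
`ℓ(ρ⁻)`, so `φ` gains a factor `q₊`. Summing over the `2n+2` values of `b` multiplies the sum by
`1 + 2n·q₊ + q₋`. -/

end TypeB

namespace Equiv.Perm

variable {X Y : Type*}

theorem SameCycle.map {f : Perm X} {g : Perm Y} (r : X → Y)
    (hr : ∀ x, g.SameCycle (r x) (r (f x))) {i j : X} (hij : f.SameCycle i j) :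
    g.SameCycle (r i) (r j) := by
  obtain ⟨k, rfl⟩ := hij
  induction k using Int.induction_on with
  | zero => exact SameCycle.refl _ _
  | succ k ih => rw [add_comm, zpow_add, zpow_one, mul_apply]; exact ih.trans (hr _)
  | pred k ih =>
    rw [sub_eq_neg_add, zpow_add, zpow_neg_one, mul_apply]
    exact ih.trans (by simpa using (hr (f⁻¹ ((f ^ (-(k : ℤ))) i))).symm)

theorem sameCycle_iff_of_collapse {f g : Perm X} (R : X → X)
    (hfg : ∀ x, g.SameCycle (R x) (R (f x))) (hgf : ∀ x, f.SameCycle x (g x))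
    (hR : ∀ x, f.SameCycle x (R x)) {i j : X} :
    f.SameCycle i j ↔ g.SameCycle (R i) (R j) :=
  ⟨SameCycle.map R hfg, fun h =>
    (hR i).trans ((h.map id hgf).trans (hR j).symm)⟩

end Equiv.Perm

theorem finsum_mem_sep {α M : Type*} [AddCommMonoid M] (s : Set α) (p : α → Prop)
    [DecidablePred p] (f : α → M) :
    ∑ᶠ a ∈ {a ∈ s | p a}, f a = ∑ᶠ a ∈ s, if p a then f a else 0 := by
  rw [finsum_mem_def, finsum_mem_def]
  congr 1
  ext a
  by_cases hs : a ∈ s <;> by_cases hp : p a <;> simp [Set.indicator, hs, hp]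

theorem finsum_mem_add_comm_of_eqOn_sdiff {α M : Type*} [AddCommMonoid M] {s t : Set α}
    {f g : α → M} (hs : s.Finite) (hts : t ⊆ s) (hfg : Set.EqOn f g (s \ t)) :
    ∑ᶠ a ∈ s, f a + ∑ᶠ a ∈ t, g a = ∑ᶠ a ∈ s, g a + ∑ᶠ a ∈ t, f a := by
  rw [← finsum_mem_add_sdiff hts hs, ← finsum_mem_add_sdiff hts hs (f := g),
    finsum_mem_congr rfl hfg]
  abel

namespace TypeB

open Equiv Equiv.Perm Function

section Cycles

variable {X : Type*}

def cycleSet (σ : Perm X) (i : X) : Set X := {j | σ.SameCycle i j}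

theorem mem_cycleSet_self (g : Perm X) (c : X) : c ∈ cycleSet g c :=
  SameCycle.refl g c

theorem cycleSet_eq_of_mem {g : Perm X} {c d : X} (hd : d ∈ cycleSet g c) :
    cycleSet g d = cycleSet g c :=
  Set.ext fun _ => ⟨hd.trans, (SameCycle.symm hd).trans⟩

theorem cycleSet_of_apply_eq {g : Perm X} {c : X} (hc : g c = c) :
    cycleSet g c = {c} :=
  Set.ext fun _ => ⟨fun h => (h.eq_of_left hc).symm, fun h => h ▸ SameCycle.refl g c⟩

theorem notMem_cycleSet_of_apply_eq {g : Perm X} {c m : X} (hm : g m = m)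
    (hc : c ≠ m) : m ∉ cycleSet g c :=
  fun h => hc (h.eq_of_right hm)

theorem cycleSet_subset (g : Perm X) (c : X) :
    cycleSet g c ⊆ insert c {x | g x ≠ x} := by
  intro j hj
  by_cases hc : g c = c
  · exact .inl (hj.eq_of_left hc).symm
  · exact .inr fun hjj => hc ((hj.apply_eq_self_iff).2 hjj)

theorem ntOrbits_finite {g : Perm X} (hg : {x | g x ≠ x}.Finite) :
    (ntOrbits g).Finite := by
  refine hg.finite_subsets.subset ?_
  rintro _ ⟨c, hc, rfl⟩ j hj
  exact fun hjj => hc (hj.apply_eq_self_iff.2 hjj)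

theorem finite_setOf_perm_fixing_compl {s : Set X} (hs : s.Finite) :
    {σ : Perm X | ∀ x ∉ s, σ x = x}.Finite := by
  classical
  have := hs.to_subtype
  refine (Set.finite_range (ofSubtype : Perm s → Perm X)).subset fun σ hσ => ?_
  have hmem : ∀ x, σ x ∈ s ↔ x ∈ s := fun x => by
    by_cases hx : x ∈ s
    · refine iff_of_true (by_contra fun h => ?_) hx
      exact h (by rwa [σ.injective (hσ _ h)])
    · rw [hσ x hx]
  exact ⟨σ.subtypePerm hmem, ofSubtype_subtypePerm hmem fun x hx => by_contra fun h => hx (hσ x h)⟩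

end Cycles

section InsertAfter

/- Right multiplication by `swap b m` inserts the fixed point `m` of `g` into the cycle of `b`,
right after `b`; `update id m b` collapses it back onto `b`. -/

variable {X : Type*} [DecidableEq X] {g : Perm X} {b m : X}

theorem mul_swap_apply_left (hm : g m = m) : (g * swap b m) b = m := by
  rw [mul_apply, swap_apply_left, hm]

theorem sameCycle_mul_swap_iff (hm : g m = m) (hbm : b ≠ m) {i j : X} :
    (g * swap b m).SameCycle i j ↔
      g.SameCycle (update id m b i) (update id m b j) := by
  have hgb : g b ≠ m := fun h => hbm (g.injective (h.trans hm.symm))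
  have hfb : (g * swap b m) b = m := mul_swap_apply_left hm
  have hfm : (g * swap b m) m = g b := by rw [mul_apply, swap_apply_right]
  have hf : ∀ x, x ≠ b → x ≠ m → (g * swap b m) x = g x := fun x h1 h2 => by
    rw [mul_apply, swap_apply_of_ne_of_ne h1 h2]
  have hgx : ∀ x, x ≠ m → g x ≠ m := fun x hx h => hx (g.injective (h.trans hm.symm))
  refine sameCycle_iff_of_collapse _ (fun x => ?_) (fun x => ?_) (fun x => ?_)
  · by_cases h1 : x = b
    · subst x; rw [hfb, update_self, update_of_ne hbm]; rfl
    by_cases h2 : x = m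
    · subst x
      rw [hfm, update_self, update_of_ne hgb]
      exact sameCycle_apply_right.2 .rfl
    rw [hf x h1 h2, update_of_ne h2, update_of_ne (hgx x h2)]
    exact sameCycle_apply_right.2 .rfl
  · by_cases h1 : x = b
    · subst x
      have hgb' : g b = (g * swap b m) ((g * swap b m) b) := by rw [hfb, hfm]
      rw [hgb']
      exact sameCycle_apply_right.2 (sameCycle_apply_right.2 .rfl)
    by_cases h2 : x = m
    · subst x; rw [hm]
    rw [← hf x h1 h2]
    exact sameCycle_apply_right.2 .rfl
  · by_cases h2 : x = m
    · subst x
      rw [update_self]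
      have := sameCycle_apply_right.2 (SameCycle.refl (g * swap b m) b)
      rw [hfb] at this
      exact this.symm
    rw [update_of_ne h2]; rfl

theorem cycleSet_mul_swap (hm : g m = m) (hbm : b ≠ m) (i : X) :
    cycleSet (g * swap b m) i = update id m b ⁻¹' cycleSet g (update id m b i) :=
  Set.ext fun _ => sameCycle_mul_swap_iff hm hbm

theorem ntOrbits_mul_swap (hm : g m = m) (hbm : b ≠ m) :
    ntOrbits (g * swap b m) = (update id m b ⁻¹' ·) '' insert (cycleSet g b) (ntOrbits g) := by
  have hfb : (g * swap b m) b = m := mul_swap_apply_left hm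
  have hf : ∀ x, x ≠ b → x ≠ m → (g * swap b m) x = g x := fun x h1 h2 => by
    rw [mul_apply, swap_apply_of_ne_of_ne h1 h2]
  ext O
  constructor
  · rintro ⟨i, hi, rfl⟩
    refine ⟨_, ?_, (cycleSet_mul_swap hm hbm i).symm⟩
    by_cases hfix : g (update id m b i) = update id m b i
    · left
      by_cases h2 : i = m
      · rw [h2, update_self]
      rw [update_of_ne h2] at hfix ⊢
      by_cases h1 : i = b
      · rw [h1]; rfl
      exact absurd ((hf i h1 h2).trans hfix) hi
    · exact .inr ⟨_, hfix, rfl⟩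
  · rintro ⟨_, rfl | ⟨c, hc, rfl⟩, rfl⟩
    · refine ⟨b, by rw [hfb]; exact hbm.symm, ?_⟩
      show _ = cycleSet _ b
      rw [cycleSet_mul_swap hm hbm, update_of_ne hbm]; rfl
    · have h2 : c ≠ m := fun h => hc (h ▸ hm)
      refine ⟨c, ?_, ?_⟩
      · by_cases h1 : c = b
        · rw [h1, hfb]; exact hbm.symm
        rwa [hf c h1 h2]
      · show _ = cycleSet _ c
        rw [cycleSet_mul_swap hm hbm, update_of_ne h2]; rfl

end InsertAfter

def IsSigned (σ : Perm ℤ) : Prop := ∀ i, σ (-i) = -σ i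

theorem IsSigned.apply_zero {σ : Perm ℤ} (hσ : IsSigned σ) : σ 0 = 0 := by
  have := hσ 0
  rw [neg_zero] at this
  omega

theorem IsSigned.mul {σ τ : Perm ℤ} (hσ : IsSigned σ) (hτ : IsSigned τ) : IsSigned (σ * τ) :=
  fun i => by rw [mul_apply, mul_apply, hτ, hσ]

theorem mem_negSet {B : Set ℤ} {x : ℤ} : x ∈ negSet B ↔ -x ∈ B := by
  simp [negSet]

theorem negSet_negSet (O : Set ℤ) : negSet (negSet O) = O := by
  ext x; simp [mem_negSet]

theorem ncard_negSet (O : Set ℤ) : (negSet O).ncard = O.ncard :=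
  Set.ncard_image_of_injective O neg_injective

theorem negSet_eq_self_iff {O : Set ℤ} : negSet (negSet O) = negSet O ↔ negSet O = O := by
  rw [negSet_negSet, eq_comm]

theorem negSet_singleton_ne {c : ℤ} (hc : c ≠ 0) : negSet {c} ≠ {c} := by
  simp only [negSet, Set.image_singleton, ne_eq, Set.singleton_eq_singleton_iff]
  omega

theorem negSet_insert (a : ℤ) (O : Set ℤ) : negSet (insert a O) = insert (-a) (negSet O) :=
  Set.image_insert_eq

theorem negSet_insert_ne_self {m : ℤ} {O : Set ℤ} (hm : m ≠ 0) (hnm : -m ∉ O) :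
    negSet (insert m O) ≠ insert m O := by
  intro he
  have : m ∈ negSet (insert m O) := by rw [he]; exact Set.mem_insert m O
  rw [mem_negSet, Set.mem_insert_iff] at this
  exact this.elim (fun h => hm (by omega)) hnm

theorem negSet_insert_insert_neg {m : ℤ} {O : Set ℤ} (hO : negSet O = O) :
    negSet (insert m (insert (-m) O)) = insert m (insert (-m) O) := by
  rw [negSet_insert, negSet_insert, hO, neg_neg, Set.insert_comm]

theorem negSet_cycleSet {g : Perm ℤ} (hg : IsSigned g) (c : ℤ) :
    negSet (cycleSet g c) = cycleSet g (-c) := by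
  have hneg : ∀ {i j : ℤ}, g.SameCycle i j → g.SameCycle (-i) (-j) :=
    SameCycle.map (fun x => -x) fun x => by rw [← hg]; exact sameCycle_apply_right.2 .rfl
  ext j
  simp only [mem_negSet, cycleSet, Set.mem_ofPred_eq]
  exact ⟨fun h => by simpa using hneg h, fun h => by simpa using hneg h⟩

theorem negSet_cycleSet_eq_self {g : Perm ℤ} (hg : IsSigned g) {c : ℤ}
    (hc : -c ∈ cycleSet g c) : negSet (cycleSet g c) = cycleSet g c := by
  rw [negSet_cycleSet hg, cycleSet_eq_of_mem hc]

theorem negSet_cycleSet_ne_self {g : Perm ℤ} {c : ℤ} (hc : -c ∉ cycleSet g c) :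
    negSet (cycleSet g c) ≠ cycleSet g c := fun h =>
  hc (h ▸ mem_negSet.2 ((neg_neg c).symm ▸ mem_cycleSet_self g c))

theorem negSet_pair_neg (m : ℤ) : negSet {m, -m} = {m, -m} := by
  ext x
  simp only [mem_negSet, Set.mem_insert_iff, Set.mem_singleton_iff]
  omega

open Classical in
def posWeight (O : Set ℤ) : ℕ := if negSet O ≠ O then O.ncard - 1 else 0

open Classical in
def negWeight (O : Set ℤ) : ℕ := if negSet O = O then O.ncard / 2 - 1 else 0

open Classical in
def negIndicator (O : Set ℤ) : ℕ := if negSet O = O then 1 else 0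

theorem expPlus_eq (σ : Perm ℤ) :
    expPlus σ = (∑ᶠ O ∈ ntOrbits σ, posWeight O) / 2 + ∑ᶠ O ∈ ntOrbits σ, negWeight O := by
  classical
  rw [expPlus, posOrbits, negOrbits, finsum_mem_sep, finsum_mem_sep]
  rfl

theorem negCount_eq (σ : Perm ℤ) : negCount σ = ∑ᶠ O ∈ ntOrbits σ, negIndicator O := by
  classical
  rw [negCount, negOrbits, ← finsum_one, finsum_mem_sep]
  rfl

section Weights

variable {O : Set ℤ}

theorem posWeight_of_ne (hO : negSet O ≠ O) : posWeight O = O.ncard - 1 := if_pos hO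

theorem posWeight_of_eq (hO : negSet O = O) : posWeight O = 0 := if_neg (not_not.2 hO)

theorem negWeight_of_eq (hO : negSet O = O) : negWeight O = O.ncard / 2 - 1 := if_pos hO

theorem negWeight_of_ne (hO : negSet O ≠ O) : negWeight O = 0 := if_neg hO

theorem negIndicator_of_eq (hO : negSet O = O) : negIndicator O = 1 := if_pos hO

theorem negIndicator_of_ne (hO : negSet O ≠ O) : negIndicator O = 0 := if_neg hO

end Weights

theorem posWeight_singleton (c : ℤ) : posWeight {c} = 0 := by
  simp [posWeight]

theorem negWeight_singleton {c : ℤ} (hc : c ≠ 0) : negWeight {c} = 0 := by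
  simp [negWeight, negSet_singleton_ne hc]

theorem negIndicator_singleton {c : ℤ} (hc : c ≠ 0) : negIndicator {c} = 0 := by
  simp [negIndicator, negSet_singleton_ne hc]

theorem posWeight_negSet (O : Set ℤ) : posWeight (negSet O) = posWeight O := by
  simp only [posWeight, ne_eq, negSet_eq_self_iff, ncard_negSet]

theorem negWeight_negSet (O : Set ℤ) : negWeight (negSet O) = negWeight O := by
  simp only [negWeight, negSet_eq_self_iff, ncard_negSet]

theorem negIndicator_negSet (O : Set ℤ) : negIndicator (negSet O) = negIndicator O := by
  simp only [negIndicator, negSet_eq_self_iff]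

def signedSwap (b m : ℤ) : Perm ℤ :=
  if b = -m then swap b m else swap b m * swap (-b) (-m)

section SignedSwap

variable {b m : ℤ}

theorem signedSwap_apply (hb : b ≠ 0) (hm : m ≠ 0) (i : ℤ) :
    signedSwap b m i = if i = b then m else if i = -b then -m
      else if i = m then b else if i = -m then -b else i := by
  rw [signedSwap]
  split_ifs <;> simp only [Perm.mul_apply, swap_apply_def] <;> split_ifs <;> omega


theorem isSigned_signedSwap (hb : b ≠ 0) (hm : m ≠ 0) : IsSigned (signedSwap b m) := fun i => by
  simp only [signedSwap_apply hb hm]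
  split_ifs <;> omega

theorem signedSwap_mul_self (hb : b ≠ 0) (hm : m ≠ 0) : signedSwap b m * signedSwap b m = 1 := by
  ext i
  simp only [mul_apply, signedSwap_apply hb hm, one_apply]
  split_ifs <;> omega

theorem signedSwap_apply_left (hb : b ≠ 0) (hm : m ≠ 0) : signedSwap b m b = m := by
  rw [signedSwap_apply hb hm, if_pos rfl]

theorem signedSwap_apply_right (hb : b ≠ 0) (hm : m ≠ 0) : signedSwap b m m = b := by
  rw [signedSwap_apply hb hm]
  split_ifs <;> omega

theorem signedSwap_apply_of_abs_lt (hb : b ≠ 0) (hm : m ≠ 0) (hbm : |b| ≤ |m|) {i : ℤ}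
    (hi : |m| < |i|) : signedSwap b m i = i := by
  rw [signedSwap_apply hb hm]
  rcases abs_cases b with hb' | hb' <;> rcases abs_cases m with hm' | hm' <;>
    rcases abs_cases i with hi' | hi' <;> split_ifs <;> omega

theorem signedSwap_self (m : ℤ) : signedSwap m m = 1 := by
  unfold signedSwap
  split_ifs <;> simp only [swap_self, ← Perm.one_def, mul_one]

end SignedSwap

def collapse (b m : ℤ) (x : ℤ) : ℤ := if x = m then b else if x = -m then -b else x

section Collapse

variable {b m : ℤ}

theorem collapse_of_ne {x : ℤ} (h1 : x ≠ m) (h2 : x ≠ -m) : collapse b m x = x := by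
  rw [collapse, if_neg h1, if_neg h2]

theorem collapse_neg (hm : m ≠ 0) (x : ℤ) : collapse b m (-x) = -collapse b m x := by
  unfold collapse; split_ifs <;> omega

end Collapse

section CollapsePreimage

variable {b m : ℤ} {O : Set ℤ}

theorem collapse_preimage_negSet (hm : m ≠ 0) (O : Set ℤ) :
    collapse b m ⁻¹' negSet O = negSet (collapse b m ⁻¹' O) := by
  ext x
  simp only [Set.mem_preimage, mem_negSet, collapse_neg hm]

theorem collapse_preimage_of_notMem (hb : b ∉ O) (hnb : -b ∉ O) (hm : m ∉ O) (hnm : -m ∉ O) :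
    collapse b m ⁻¹' O = O := by
  ext x
  simp only [Set.mem_preimage, collapse]
  split_ifs with h1 h2
  · subst x; simp [hb, hm]
  · subst x; simp [hnb, hnm]
  · rfl

theorem collapse_preimage_of_mem_of_notMem (hm0 : m ≠ 0) (hb : b ∈ O) (hnb : -b ∉ O)
    (hnm : -m ∉ O) : collapse b m ⁻¹' O = insert m O := by
  ext x
  simp only [Set.mem_preimage, Set.mem_insert_iff, collapse]
  split_ifs with h1 h2
  · simp [h1, hb]
  · subst x; simp only [hnb, hnm, or_false, false_iff]; exact fun h => hm0 (by omega)
  · simp [h1]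

theorem collapse_preimage_of_mem_of_mem (hb : b ∈ O) (hnb : -b ∈ O) :
    collapse b m ⁻¹' O = insert m (insert (-m) O) := by
  ext x
  simp only [Set.mem_preimage, Set.mem_insert_iff, collapse]
  split_ifs with h1 h2
  · simp [h1, hb]
  · simp [h2, hnb]
  · simp [h1, h2]

end CollapsePreimage

theorem update_comp_update_eq_collapse {b m : ℤ} (hbm : b ≠ -m) (hm : m ≠ 0) :
    update id m b ∘ update id (-m) (-b) = collapse b m := by
  ext x
  simp only [comp_apply, update_apply, id_eq, collapse]
  split_ifs <;> omega

/-- `g * signedSwap b m` is `g` with `m` inserted after `b` and `-m` after `-b`. -/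
structure Insertable (g : Perm ℤ) (b m : ℤ) : Prop where
  signed : IsSigned g
  apply_m : g m = m
  b_ne_zero : b ≠ 0
  m_ne_zero : m ≠ 0
  b_ne_m : b ≠ m
  b_ne_neg_m : b ≠ -m

namespace Insertable

variable {g : Perm ℤ} {b m : ℤ}

theorem apply_neg_m (h : Insertable g b m) : g (-m) = -m := by rw [h.signed, h.apply_m]

theorem ntOrbits_mul (h : Insertable g b m) :
    ntOrbits (g * signedSwap b m) =
      (collapse b m ⁻¹' ·) '' insert (cycleSet g b) (insert (cycleSet g (-b)) (ntOrbits g)) := by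
  have := h.b_ne_m; have := h.b_ne_neg_m; have := h.m_ne_zero
  have hτ : (g * swap b m) (-m) = -m := by
    rw [mul_apply, swap_apply_of_ne_of_ne (by omega) (by omega), h.apply_neg_m]
  rw [signedSwap, if_neg h.b_ne_neg_m, ← mul_assoc, ntOrbits_mul_swap hτ (by omega),
    ntOrbits_mul_swap h.apply_m h.b_ne_m, cycleSet_mul_swap h.apply_m h.b_ne_m,
    update_of_ne (by omega), ← Set.image_insert_eq, Set.image_image, Set.insert_comm,
    ← update_comp_update_eq_collapse h.b_ne_neg_m h.m_ne_zero]
  rfl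

theorem notMem_of_mem_insert (h : Insertable g b m) {O : Set ℤ}
    (hO : O ∈ insert (cycleSet g b) (insert (cycleSet g (-b)) (ntOrbits g))) :
    m ∉ O ∧ -m ∉ O := by
  have avoid : ∀ c, c ≠ m → c ≠ -m → m ∉ cycleSet g c ∧ -m ∉ cycleSet g c := fun c h1 h2 =>
    ⟨notMem_cycleSet_of_apply_eq h.apply_m h1, notMem_cycleSet_of_apply_eq h.apply_neg_m h2⟩
  have := h.b_ne_m; have := h.b_ne_neg_m; have := h.m_ne_zero
  rcases hO with rfl | rfl | ⟨c, hc, rfl⟩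
  · exact avoid b h.b_ne_m h.b_ne_neg_m
  · exact avoid (-b) (by omega) (by omega)
  · exact avoid c (fun hcm => hc (hcm ▸ h.apply_m)) (fun hcm => hc (hcm ▸ h.apply_neg_m))

/-- Only the cycles through `b` and `-b` change; when these are fixed points of `g` they are
singletons outside `ntOrbits g`, whence the hypothesis `hw`. -/
theorem finsum_ntOrbits_mul (h : Insertable g b m) (hs : {x | g x ≠ x}.Finite)
    {M : Type*} [AddCommMonoid M] (w : Set ℤ → M) (hw : ∀ c ≠ 0, w {c} = 0) :
    ∑ᶠ O ∈ ntOrbits (g * signedSwap b m), w O +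
        ∑ᶠ O ∈ ({cycleSet g b, cycleSet g (-b)} : Set (Set ℤ)), w O =
      ∑ᶠ O ∈ ntOrbits g, w O +
        ∑ᶠ O ∈ ({cycleSet g b, cycleSet g (-b)} : Set (Set ℤ)), w (collapse b m ⁻¹' O) := by
  set T := insert (cycleSet g b) (insert (cycleSet g (-b)) (ntOrbits g))
  have hTfin : T.Finite := ((ntOrbits_finite hs).insert _).insert _
  have hinj : Set.InjOn (collapse b m ⁻¹' ·) T := by
    intro O₁ h₁ O₂ h₂ he
    ext x
    by_cases hx : x = m ∨ x = -m
    · have := h.notMem_of_mem_insert h₁; have := h.notMem_of_mem_insert h₂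
      rcases hx with rfl | rfl <;> tauto
    · obtain ⟨h1, h2⟩ := not_or.1 hx
      simpa only [Set.mem_preimage, collapse_of_ne h1 h2] using Set.ext_iff.1 he x
  have hsame : Set.EqOn (fun O => w (collapse b m ⁻¹' O)) w
      (T \ ({cycleSet g b, cycleSet g (-b)} : Set (Set ℤ))) := by
    rintro O ⟨hOT, hOU⟩
    obtain ⟨hm, hnm⟩ := h.notMem_of_mem_insert hOT
    rcases hOT with rfl | rfl | ⟨c, -, rfl⟩
    · exact absurd (.inl rfl) hOU
    · exact absurd (.inr rfl) hOU
    have hb : b ∉ cycleSet g c := fun hb => hOU (.inl (cycleSet_eq_of_mem hb).symm)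
    have hnb : -b ∉ cycleSet g c := fun hb => hOU (.inr (cycleSet_eq_of_mem hb).symm)
    change w (collapse b m ⁻¹' cycleSet g c) = w (cycleSet g c)
    rw [collapse_preimage_of_notMem hb hnb hm hnm]
  have hzero : ∀ c ≠ 0, cycleSet g c ∉ ntOrbits g → w (cycleSet g c) = 0 := by
    intro c hc hnt
    have hfix : g c = c := by by_contra hne; exact hnt ⟨c, hne, rfl⟩
    rw [cycleSet_of_apply_eq hfix, hw c hc]
  have hTg : ∑ᶠ O ∈ T, w O = ∑ᶠ O ∈ ntOrbits g, w O := by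
    rw [finsum_mem_insert_of_eq_zero_if_notMem
        (fun hn => hzero b h.b_ne_zero fun hb => hn (.inr hb)),
      finsum_mem_insert_of_eq_zero_if_notMem (hzero (-b) (neg_ne_zero.2 h.b_ne_zero))]
  rw [h.ntOrbits_mul, finsum_mem_image hinj, ← hTg]
  exact finsum_mem_add_comm_of_eqOn_sdiff hTfin
    (Set.insert_subset_insert (Set.singleton_subset_iff.2 (Set.mem_insert _ _))) hsame

theorem finsum_ntOrbits_mul_of_notMem (h : Insertable g b m) (hs : {x | g x ≠ x}.Finite)
    {M : Type*} [AddCommMonoid M] (w : Set ℤ → M) (hw : ∀ c ≠ 0, w {c} = 0)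
    (hwneg : ∀ O, w (negSet O) = w O) (hnb : -b ∉ cycleSet g b) :
    ∑ᶠ O ∈ ntOrbits (g * signedSwap b m), w O + (w (cycleSet g b) + w (cycleSet g b)) =
      ∑ᶠ O ∈ ntOrbits g, w O +
        (w (insert m (cycleSet g b)) + w (insert m (cycleSet g b))) := by
  have hneg := negSet_cycleSet h.signed b
  have hne : cycleSet g b ≠ cycleSet g (-b) := fun he => hnb (he ▸ SameCycle.refl g (-b))
  obtain ⟨-, hnm⟩ := h.notMem_of_mem_insert (Set.mem_insert (cycleSet g b) _)
  have hpre : collapse b m ⁻¹' cycleSet g b = insert m (cycleSet g b) :=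
    collapse_preimage_of_mem_of_notMem h.m_ne_zero (SameCycle.refl g b) hnb hnm
  have := h.finsum_ntOrbits_mul hs w hw
  rwa [finsum_mem_pair hne, finsum_mem_pair hne, ← hneg, collapse_preimage_negSet h.m_ne_zero,
    hwneg, hwneg, hpre] at this

theorem finsum_ntOrbits_mul_of_mem (h : Insertable g b m) (hs : {x | g x ≠ x}.Finite)
    {M : Type*} [AddCommMonoid M] (w : Set ℤ → M) (hw : ∀ c ≠ 0, w {c} = 0)
    (hnb : -b ∈ cycleSet g b) :
    ∑ᶠ O ∈ ntOrbits (g * signedSwap b m), w O + w (cycleSet g b) =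
      ∑ᶠ O ∈ ntOrbits g, w O + w (insert m (insert (-m) (cycleSet g b))) := by
  have := h.finsum_ntOrbits_mul hs w hw
  rwa [cycleSet_eq_of_mem hnb, Set.pair_eq_singleton, finsum_mem_singleton, finsum_mem_singleton,
    collapse_preimage_of_mem_of_mem (SameCycle.refl g b) hnb] at this

theorem expPlus_mul (h : Insertable g b m) (hs : {x | g x ≠ x}.Finite) :
    expPlus (g * signedSwap b m) = expPlus g + 1 := by
  have hfin : (cycleSet g b).Finite := (hs.insert b).subset (cycleSet_subset g b)
  have hb := mem_cycleSet_self g b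
  obtain ⟨hm, hnm⟩ := h.notMem_of_mem_insert (Set.mem_insert (cycleSet g b) _)
  rw [expPlus_eq, expPlus_eq]
  -- Either `b` and `-b` share a self-negative cycle, which grows by `{m, -m}`, or they lie in
  -- mirror cycles (possibly fixed points), each of which grows by one point.
  by_cases hnb : -b ∈ cycleSet g b
  · have hO := negSet_cycleSet_eq_self h.signed hnb
    have hcard : 2 ≤ (cycleSet g b).ncard := by
      rw [← Set.ncard_pair (a := b) (b := -b) (by have := h.b_ne_zero; omega)]
      exact Set.ncard_le_ncard (Set.pair_subset hb hnb) hfin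
    have hcard' : (insert m (insert (-m) (cycleSet g b))).ncard = (cycleSet g b).ncard + 2 := by
      rw [Set.ncard_insert_of_notMem (by have := h.m_ne_zero; simp [hm]; omega) (hfin.insert _),
        Set.ncard_insert_of_notMem hnm hfin]
    have e₁ := h.finsum_ntOrbits_mul_of_mem hs posWeight (fun c _ => posWeight_singleton c) hnb
    have e₂ := h.finsum_ntOrbits_mul_of_mem hs negWeight (fun _ => negWeight_singleton) hnb
    rw [posWeight_of_eq hO, posWeight_of_eq (negSet_insert_insert_neg hO)] at e₁
    rw [negWeight_of_eq hO, negWeight_of_eq (negSet_insert_insert_neg hO), hcard'] at e₂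
    omega
  · have hO := negSet_cycleSet_ne_self hnb
    have hcard : 0 < (cycleSet g b).ncard := (Set.ncard_pos hfin).2 ⟨b, hb⟩
    have hcard' : (insert m (cycleSet g b)).ncard = (cycleSet g b).ncard + 1 :=
      Set.ncard_insert_of_notMem hm hfin
    have hO' := negSet_insert_ne_self h.m_ne_zero hnm
    have e₁ := h.finsum_ntOrbits_mul_of_notMem hs posWeight (fun c _ => posWeight_singleton c)
      posWeight_negSet hnb
    have e₂ := h.finsum_ntOrbits_mul_of_notMem hs negWeight (fun _ => negWeight_singleton)
      negWeight_negSet hnb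
    rw [posWeight_of_ne hO, posWeight_of_ne hO', hcard'] at e₁
    rw [negWeight_of_ne hO, negWeight_of_ne hO'] at e₂
    omega

theorem negCount_mul (h : Insertable g b m) (hs : {x | g x ≠ x}.Finite) :
    negCount (g * signedSwap b m) = negCount g := by
  obtain ⟨-, hnm⟩ := h.notMem_of_mem_insert (Set.mem_insert (cycleSet g b) _)
  rw [negCount_eq, negCount_eq]
  by_cases hnb : -b ∈ cycleSet g b
  · have hO := negSet_cycleSet_eq_self h.signed hnb
    have e := h.finsum_ntOrbits_mul_of_mem hs negIndicator (fun _ => negIndicator_singleton) hnb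
    rwa [negIndicator_of_eq hO, negIndicator_of_eq (negSet_insert_insert_neg hO),
      add_left_inj] at e
  · have hO := negSet_cycleSet_ne_self hnb
    have e := h.finsum_ntOrbits_mul_of_notMem hs negIndicator (fun _ => negIndicator_singleton)
      negIndicator_negSet hnb
    rwa [negIndicator_of_ne hO, negIndicator_of_ne (negSet_insert_ne_self h.m_ne_zero hnm),
      add_left_inj] at e

theorem phi_mul (h : Insertable g b m) (hs : {x | g x ≠ x}.Finite) (qp qm : ℂ) :
    phi qp qm (g * signedSwap b m) = qp * phi qp qm g := by
  rw [phi, phi, h.expPlus_mul hs, h.negCount_mul hs, pow_succ]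
  ring

end Insertable

section SignChange

variable {g : Perm ℤ} {m : ℤ}

theorem ntOrbits_mul_swap_neg (hg : IsSigned g) (hm : g m = m) (hm0 : m ≠ 0) :
    ntOrbits (g * swap (-m) m) = insert {m, -m} (ntOrbits g) := by
  have hnm : g (-m) = -m := by rw [hg, hm]
  rw [ntOrbits_mul_swap hm (by omega), cycleSet_of_apply_eq hnm, Set.image_insert_eq]
  congr 1
  · ext x
    simp only [Set.mem_preimage, update_apply, id_eq, Set.mem_singleton_iff, Set.mem_insert_iff]
    split_ifs <;> omega
  · refine Set.EqOn.image_eq_self ?_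
    rintro _ ⟨c, hc, rfl⟩
    have h1 := notMem_cycleSet_of_apply_eq hm fun h : c = m => hc (h ▸ hm)
    have h2 := notMem_cycleSet_of_apply_eq hnm fun h : c = -m => hc (h ▸ hnm)
    ext x
    simp only [Set.mem_preimage, update_apply, id_eq]
    split_ifs with hx
    · subst x; exact iff_of_false h2 h1
    · rfl

theorem pair_neg_notMem_ntOrbits (hm : g m = m) : {m, -m} ∉ ntOrbits g := by
  rintro ⟨c, hc, hO⟩
  have hmem : m ∈ cycleSet g c := by rw [cycleSet, ← hO]; exact Set.mem_insert m _
  exact notMem_cycleSet_of_apply_eq hm (fun h : c = m => hc (h ▸ hm)) hmem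

theorem phi_mul_swap_neg (hg : IsSigned g) (hm : g m = m) (hm0 : m ≠ 0)
    (hs : {x | g x ≠ x}.Finite) (qp qm : ℂ) :
    phi qp qm (g * swap (-m) m) = qm * phi qp qm g := by
  have hfin := ntOrbits_finite hs
  have hnot := pair_neg_notMem_ntOrbits hm
  have hpair := negSet_pair_neg m
  have hcard : ({m, -m} : Set ℤ).ncard = 2 := Set.ncard_pair (by omega)
  rw [phi, phi, expPlus_eq, expPlus_eq, negCount_eq, negCount_eq, ntOrbits_mul_swap_neg hg hm hm0,
    finsum_mem_insert _ hnot hfin, finsum_mem_insert _ hnot hfin, finsum_mem_insert _ hnot hfin,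
    posWeight_of_eq hpair, negWeight_of_eq hpair, negIndicator_of_eq hpair, hcard]
  simp only [zero_add, Nat.reduceDiv, tsub_self]
  ring

end SignChange

section Bset

variable {n : ℕ} {σ g : Perm ℤ}

theorem isSigned_of_mem_bset (hσ : σ ∈ Bset n) : IsSigned σ := hσ.1

theorem bset_finite (n : ℕ) : (Bset n).Finite :=
  (finite_setOf_perm_fixing_compl (Set.finite_Icc (-(n : ℤ)) n)).subset fun _ hσ i hi =>
    hσ.2 i (by rw [Set.mem_Icc, ← abs_le, not_le] at hi; exact hi)

theorem support_finite_of_mem_bset (hσ : σ ∈ Bset n) : {x | σ x ≠ x}.Finite :=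
  (Set.finite_Icc (-(n : ℤ)) n).subset fun i hi => by
    rw [Set.mem_Icc, ← abs_le]
    exact not_lt.1 fun h => hi (hσ.2 i h)

theorem mul_signedSwap_mem_bset (hg : g ∈ Bset n) {b : ℤ} (hb : b ≠ 0) (hbm : |b| ≤ n + 1) :
    g * signedSwap b (n + 1) ∈ Bset (n + 1) := by
  have hm : (n : ℤ) + 1 ≠ 0 := by omega
  refine ⟨(isSigned_of_mem_bset hg).mul (isSigned_signedSwap hb hm), fun i hi => ?_⟩
  have habs : |((n : ℤ) + 1)| = n + 1 := abs_of_pos (by omega)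
  push_cast at hi
  rw [mul_apply, signedSwap_apply_of_abs_lt hb hm (by rwa [habs]) (by rwa [habs])]
  exact hg.2 i (by omega)

theorem mem_erase_Icc_iff {m b : ℤ} : b ∈ (Finset.Icc (-m) m).erase 0 ↔ b ≠ 0 ∧ |b| ≤ m := by
  rw [Finset.mem_erase, Finset.mem_Icc, ← abs_le]

theorem inv_apply_mem_erase_Icc (hσ : σ ∈ Bset (n + 1)) :
    σ⁻¹ (n + 1) ∈ (Finset.Icc (-((n : ℤ) + 1)) (n + 1)).erase 0 := by
  have hσb : σ (σ⁻¹ (n + 1)) = n + 1 := σ.apply_symm_apply _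
  rw [mem_erase_Icc_iff]
  constructor
  · intro h0
    rw [h0, (isSigned_of_mem_bset hσ).apply_zero] at hσb
    omega
  · by_contra hlt
    rw [not_le] at hlt
    have hfix := hσ.2 _ (by exact_mod_cast hlt)
    push_cast at hfix
    rw [hσb] at hfix
    rw [← hfix, abs_of_pos (by omega)] at hlt
    exact lt_irrefl _ hlt

theorem mul_signedSwap_inv_mem_bset (hσ : σ ∈ Bset (n + 1)) :
    σ * signedSwap (σ⁻¹ (n + 1)) (n + 1) ∈ Bset n := by
  obtain ⟨hb, hbm⟩ := mem_erase_Icc_iff.1 (inv_apply_mem_erase_Icc hσ)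
  have hm : (n : ℤ) + 1 ≠ 0 := by omega
  have habs : |((n : ℤ) + 1)| = n + 1 := abs_of_pos (by omega)
  have hsigned := (isSigned_of_mem_bset hσ).mul (isSigned_signedSwap hb hm)
  have hfix : (σ * signedSwap (σ⁻¹ (n + 1)) (n + 1)) (n + 1) = n + 1 := by
    rw [mul_apply, signedSwap_apply_right hb hm]
    exact σ.apply_symm_apply _
  refine ⟨hsigned, fun i hi => ?_⟩
  rcases (by rcases abs_cases i with h | h <;> omega :
      i = n + 1 ∨ i = -(n + 1) ∨ (n : ℤ) + 1 < |i|) with rfl | rfl | hi'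
  · exact hfix
  · rw [hsigned, hfix]
  · rw [mul_apply, signedSwap_apply_of_abs_lt hb hm (by rwa [habs]) (by rwa [habs])]
    exact hσ.2 i (by exact_mod_cast hi')

theorem sum_bset_succ {M : Type*} [AddCommMonoid M] (F : Perm ℤ → M) :
    ∑ σ ∈ (bset_finite (n + 1)).toFinset, F σ =
      ∑ g ∈ (bset_finite n).toFinset, ∑ b ∈ (Finset.Icc (-((n : ℤ) + 1)) (n + 1)).erase 0,
        F (g * signedSwap b (n + 1)) := by
  have hm : (n : ℤ) + 1 ≠ 0 := by omega
  rw [← Finset.sum_product']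
  symm
  refine Finset.sum_nbij' (fun p => p.1 * signedSwap p.2 (n + 1))
    (fun σ => (σ * signedSwap (σ⁻¹ (n + 1)) (n + 1), σ⁻¹ (n + 1))) ?_ ?_ ?_ ?_ fun _ _ => rfl
  · rintro ⟨g, b⟩ hp
    rw [Finset.mem_product, Set.Finite.mem_toFinset, mem_erase_Icc_iff] at hp
    rw [Set.Finite.mem_toFinset]
    exact mul_signedSwap_mem_bset hp.1 hp.2.1 hp.2.2
  · intro σ hσ
    rw [Set.Finite.mem_toFinset] at hσ
    rw [Finset.mem_product, Set.Finite.mem_toFinset]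
    exact ⟨mul_signedSwap_inv_mem_bset hσ, inv_apply_mem_erase_Icc hσ⟩
  · rintro ⟨g, b⟩ hp
    rw [Finset.mem_product, Set.Finite.mem_toFinset, mem_erase_Icc_iff] at hp
    have hinv : (g * signedSwap b (n + 1))⁻¹ (n + 1) = b := by
      rw [inv_eq_iff_eq, mul_apply, signedSwap_apply_left hp.2.1 hm]
      exact (hp.1.2 _ (by rw [abs_of_pos (by omega)]; omega)).symm
    simp only [hinv, mul_assoc, signedSwap_mul_self hp.2.1 hm, mul_one]
  · intro σ hσ
    rw [Set.Finite.mem_toFinset] at hσ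
    have hb := (mem_erase_Icc_iff.1 (inv_apply_mem_erase_Icc hσ)).1
    simp only [mul_assoc, signedSwap_mul_self hb hm, mul_one]

theorem sum_phi_mul_signedSwap (hg : g ∈ Bset n) (qp qm : ℂ) :
    ∑ b ∈ (Finset.Icc (-((n : ℤ) + 1)) (n + 1)).erase 0, phi qp qm (g * signedSwap b (n + 1)) =
      (1 + 2 * n * qp + qm) * phi qp qm g := by
  set m : ℤ := n + 1
  set I := (Finset.Icc (-m) m).erase 0
  have hm : m ≠ 0 := by omega
  have habs : |m| = m := abs_of_pos (by omega)
  have hgm : g m = m := hg.2 m (by omega)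
  have hs := support_finite_of_mem_bset hg
  have hmI : m ∈ I := mem_erase_Icc_iff.2 ⟨hm, habs.le⟩
  have hnmI : -m ∈ I.erase m :=
    Finset.mem_erase.2 ⟨by omega, mem_erase_Icc_iff.2 ⟨by omega, by rw [abs_neg, habs]⟩⟩
  have hrest : ∀ b ∈ (I.erase m).erase (-m),
      phi qp qm (g * signedSwap b m) = qp * phi qp qm g := by
    intro b hb
    obtain ⟨hb1, hb2, hb3⟩ : b ≠ -m ∧ b ≠ m ∧ b ∈ I := by simpa only [Finset.mem_erase] using hb
    exact Insertable.phi_mul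
      ⟨isSigned_of_mem_bset hg, hgm, (mem_erase_Icc_iff.1 hb3).1, hm, hb2, hb1⟩ hs qp qm
  have hcard : ((I.erase m).erase (-m)).card = 2 * n := by
    rw [Finset.card_erase_of_mem hnmI, Finset.card_erase_of_mem hmI,
      Finset.card_erase_of_mem (Finset.mem_Icc.2 ⟨by omega, by omega⟩), Int.card_Icc]
    omega
  rw [← Finset.add_sum_erase _ _ hmI, ← Finset.add_sum_erase _ _ hnmI, Finset.sum_congr rfl hrest,
    Finset.sum_const, hcard, signedSwap_self, mul_one, signedSwap, if_pos rfl,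
    phi_mul_swap_neg (isSigned_of_mem_bset hg) hgm hm hs, nsmul_eq_mul]
  push_cast
  ring

theorem bset_zero : Bset 0 = {1} := by
  ext σ
  refine ⟨fun hσ => Equiv.ext fun i => ?_, fun hσ => ?_⟩
  · rcases eq_or_ne i 0 with rfl | hi
    · exact (isSigned_of_mem_bset hσ).apply_zero
    · exact hσ.2 i (by simpa using hi)
  · rw [Set.mem_singleton_iff.1 hσ]
    exact ⟨fun _ => rfl, fun _ _ => rfl⟩

theorem phi_one (qp qm : ℂ) : phi qp qm 1 = 1 := by
  have h : ntOrbits (1 : Perm ℤ) = ∅ := Set.eq_empty_of_forall_notMem fun _ ⟨_, hi, _⟩ => hi rfl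
  simp [phi, expPlus_eq, negCount_eq, h]

theorem sum_phi_bset (n : ℕ) (qp qm : ℂ) :
    ∑ σ ∈ (bset_finite n).toFinset, phi qp qm σ =
      ∏ k ∈ Finset.range n, (1 + 2 * (k : ℂ) * qp + qm) := by
  induction n with
  | zero =>
    have h : (bset_finite 0).toFinset = {1} := by ext; simp [bset_zero]
    rw [h, Finset.sum_singleton, phi_one, Finset.prod_range_zero]
  | succ n ih =>
    rw [sum_bset_succ, Finset.sum_congr rfl fun g hg =>
      sum_phi_mul_signedSwap ((Set.Finite.mem_toFinset _).1 hg) qp qm, ← Finset.mul_sum, ih,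
      Finset.prod_range_succ]
    ring

end Bset

section Tensor

variable {α : Type*} {n : ℕ}

theorem inner00_smul_right (c : ℂ) (F G : Ksp α n) : inner00 F (c • G) = c * inner00 F G := by
  simp only [inner00, Finsupp.smul_apply, smul_eq_mul, Finsupp.sum, Finset.mul_sum]
  exact Finset.sum_congr rfl fun _ _ => by ring

theorem innerH_cplx_self (x : α →₀ ℝ) :
    innerH (cplx x) (cplx x) = ((x.sum fun _ c => c ^ 2 : ℝ) : ℂ) := by
  rw [innerH, cplx, Finsupp.sum_mapRange_index (by simp), Finsupp.sum, Finsupp.sum,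
    Complex.ofReal_sum]
  refine Finset.sum_congr rfl fun a _ => ?_
  simp [Finsupp.mapRange_apply, sq]

theorem tpow_apply [DecidableEq α] (x : Hsp α) (v : SIdx n → α) : tpow α x n v = ∏ i, x (v i) := by
  rw [tpow, Finsupp.finsetSum_apply]
  simp only [Finsupp.single_apply, Finset.sum_ite_eq', Fintype.mem_piFinset,
    Finsupp.mem_support_iff]
  split_ifs with hv
  · rfl
  · obtain ⟨i, hi⟩ := not_forall.1 hv
    exact (Finset.prod_eq_zero (Finset.mem_univ i) (not_not.1 hi)).symm

theorem act_tpow [DecidableEq α] (σ : Perm ℤ) (x : Hsp α) :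
    act α n σ (tpow α x n) = tpow α x n := by
  set p := permRestrict n σ
  ext w
  have hinj : Injective fun v : SIdx n → α => v ∘ p := p.surjective.injective_comp_right
  have hw : w = (w ∘ p.symm) ∘ p := by ext i; simp
  rw [act, Finsupp.lmapDomain_apply, hw, Finsupp.mapDomain_apply hinj, tpow_apply, tpow_apply]
  exact (Equiv.prod_comp p _).symm

theorem inner00_tpow_self [DecidableEq α] (x : Hsp α) :
    inner00 (tpow α x n) (tpow α x n) = innerH x x ^ Fintype.card (SIdx n) := by
  have hsupp : (tpow α x n).support ⊆ Fintype.piFinset fun _ => x.support := fun v hv => by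
    rw [Finsupp.mem_support_iff, tpow_apply] at hv
    exact Fintype.mem_piFinset.2 fun i => Finsupp.mem_support_iff.2 fun h =>
      hv (Finset.prod_eq_zero (Finset.mem_univ i) h)
  rw [inner00, Finsupp.sum_of_support_subset _ hsupp _ (fun _ _ => by simp), innerH, Finsupp.sum,
    ← Finset.card_univ, ← Finset.prod_const, Finset.prod_univ_sum]
  refine Finset.sum_congr rfl fun v _ => ?_
  rw [tpow_apply, map_prod, ← Finset.prod_mul_distrib]

theorem Pop_apply_of_forall_act_eq [DecidableEq α] {F : Ksp α n} (hF : ∀ σ, act α n σ F = F)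
    (qp qm : ℂ) :
    Pop α n qp qm F = (∑ σ ∈ (bset_finite n).toFinset, phi qp qm σ) • F := by
  rw [Pop, finsum_mem_eq_finite_toFinset_sum _ (bset_finite n), LinearMap.sum_apply,
    Finset.sum_smul]
  simp only [LinearMap.smul_apply, hF]

end Tensor

/-- for a unit vector x ∈ H_ℝ and all complex parameters q₊,q₋,
⟨x^{⊗2n}, P^{(n)}_{q₊,q₋} x^{⊗2n}⟩₀,₀ = ∏_{k=0}^{n−1} (1 + 2k·q₊ + q₋). -/
theorem symmetrizer_norm_tensor_power (α : Type*) [DecidableEq α] (qp qm : ℂ)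
    (x : α →₀ ℝ) (hx : (x.sum fun _ c => c ^ 2) = 1) (n : ℕ) :
    inner00 (tpow α (cplx x) n) (Pop α n qp qm (tpow α (cplx x) n))
      = ∏ k ∈ Finset.range n, (1 + 2 * (k : ℂ) * qp + qm) := by
  rw [Pop_apply_of_forall_act_eq (fun σ => act_tpow σ _), inner00_smul_right, inner00_tpow_self,
    innerH_cplx_self, hx, Complex.ofReal_one, one_pow, mul_one, sum_phi_bset]

end TypeB
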